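/- Let f be a nonzero homogeneous Darboux polynomial of degree m of the three-dimensional Lotka–Volterra system with cofactor α·x1 + β·x2 + γ·x3. Then either α = 0 or α = −α1·r − α2·s for some non-negative integers α1, α2 with 1 ≤ α1 + α2 ≤ m; similarly, either β = 0 or β = β1·r − β2·t for some non-negative integers β1, β2 with 1 ≤ β1 + β2 ≤ m. -/

import Mathlib

/-!
Each `xᵢ ∂ᵢ` acts diagonally on monomials, `xᵢ ∂ᵢ x^ν = νᵢ x^ν`, so the Lotka–Volterra derivation
with matrix `A` is `∑ⱼ xⱼ Dⱼ`, where `Dⱼ` scales the coefficient of `x^ν` by `∑ᵢ νᵢ Aᵢⱼ`.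
In `L f = (∑ⱼ kⱼ xⱼ) f` compare the coefficients of `x^d xⱼ`, where `d` is an exponent of `f`
with maximal `j`-th entry: a summand `xₗ (Dₗ f - kₗ f)` with `l ≠ j` could only contribute through
an exponent of `f` with larger `j`-th entry, hence `kⱼ = ∑ᵢ dᵢ Aᵢⱼ`. Here this reads
`α = -d₁ r - d₂ s` and `β = d₀ r - d₂ t`, and homogeneity gives `d₀ + d₁ + d₂ = m`.
-/

open MvPolynomial

/-- Lie derivative along the 3D Lotka-Volterra vector field with parameters r, s, t. -/
noncomputable def LV (r s t : ℝ) (f : MvPolynomial (Fin 3) ℝ) : MvPolynomial (Fin 3) ℝ :=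
  X 0 * (C r * X 1 + C s * X 2) * pderiv 0 f
  + X 1 * (C (-r) * X 0 + C t * X 2) * pderiv 1 f
  + X 2 * (C (-s) * X 0 + C (-t) * X 1) * pderiv 2 f

namespace MvPolynomial

variable {σ R : Type*}

section CommSemiring

variable [CommSemiring R]

theorem coeff_X_mul_pderiv (i : σ) (f : MvPolynomial σ R) (ν : σ →₀ ℕ) :
    coeff ν (X i * pderiv i f) = ν i * coeff ν f := by
  classical
  induction f using MvPolynomial.induction_on' with
  | monomial μ a =>
    rw [X_mul_pderiv_monomial, coeff_smul, coeff_monomial, nsmul_eq_mul]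
    split_ifs with h
    · rw [h]
    · simp
  | add p q hp hq => rw [map_add, mul_add, coeff_add, coeff_add, hp, hq, mul_add]

theorem coeff_add_single_X_mul_eq_zero {p : MvPolynomial σ R} {d : σ →₀ ℕ} {j j₀ : σ}
    (hj : j ≠ j₀) (hp : ∀ ν : σ →₀ ℕ, d j₀ < ν j₀ → coeff ν p = 0) :
    coeff (d + Finsupp.single j₀ 1) (X j * p) = 0 := by
  classical
  rw [coeff_X_mul']
  split_ifs
  · exact hp _ (by simp [hj.symm])
  · rfl

variable [Fintype σ]

noncomputable def lotkaVolterraLieDeriv (A : Matrix σ σ R) (f : MvPolynomial σ R) :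
    MvPolynomial σ R :=
  ∑ i, X i * (∑ j, C (A i j) * X j) * pderiv i f

theorem lotkaVolterraLieDeriv_eq_sum_X_mul (A : Matrix σ σ R) (f : MvPolynomial σ R) :
    lotkaVolterraLieDeriv A f = ∑ j, X j * ∑ i, C (A i j) * (X i * pderiv i f) := by
  simp only [lotkaVolterraLieDeriv, Finset.mul_sum, Finset.sum_mul]
  rw [Finset.sum_comm]
  refine Finset.sum_congr rfl fun j _ => Finset.sum_congr rfl fun i _ => ?_
  ring

theorem coeff_sum_C_mul_X_mul_pderiv (A : Matrix σ σ R) (f : MvPolynomial σ R) (j : σ)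
    (ν : σ →₀ ℕ) :
    coeff ν (∑ i, C (A i j) * (X i * pderiv i f)) = (∑ i, (ν i : R) * A i j) * coeff ν f := by
  simp only [coeff_sum, coeff_C_mul, coeff_X_mul_pderiv, Finset.sum_mul]
  exact Finset.sum_congr rfl fun i _ => by ring

end CommSemiring

theorem exists_mem_support_cofactor_eq [CommRing R] [NoZeroDivisors R] [Fintype σ]
    {A : Matrix σ σ R} {f : MvPolynomial σ R} {k : σ → R} (hf : f ≠ 0)
    (hD : lotkaVolterraLieDeriv A f = (∑ j, C (k j) * X j) * f) (j₀ : σ) :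
    ∃ d ∈ f.support, k j₀ = ∑ i, (d i : R) * A i j₀ := by
  obtain ⟨d, hd, hmax⟩ := f.support.exists_max_image (· j₀) (support_nonempty.mpr hf)
  refine ⟨d, hd, ?_⟩
  set h : σ → MvPolynomial σ R := fun j => ∑ i, C (A i j) * (X i * pderiv i f) - C (k j) * f
  have coeff_h (j : σ) (ν : σ →₀ ℕ) :
      coeff ν (h j) = (∑ i, (ν i : R) * A i j - k j) * coeff ν f := by
    simp only [h, coeff_sub, coeff_sum_C_mul_X_mul_pderiv, coeff_C_mul]
    ring
  have hsum : ∑ j, X j * h j = 0 := by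
    simp only [h, mul_sub, Finset.sum_sub_distrib, ← lotkaVolterraLieDeriv_eq_sum_X_mul, hD,
      Finset.sum_mul]
    exact sub_eq_zero.mpr (Finset.sum_congr rfl fun j _ => by ring)
  have hcoeff := congrArg (coeff (d + Finsupp.single j₀ 1)) hsum
  rw [coeff_sum, Finset.sum_eq_single j₀ ?_ (by simp), add_comm, coeff_X_mul, coeff_h,
    coeff_zero] at hcoeff
  · exact (sub_eq_zero.mp ((mul_eq_zero.mp hcoeff).resolve_right (mem_support_iff.mp hd))).symm
  · intro j _ hj
    refine coeff_add_single_X_mul_eq_zero hj fun ν hν => ?_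
    rw [coeff_h, notMem_support_iff.mp fun hν' => not_lt.mpr (hmax ν hν') hν, mul_zero]

end MvPolynomial

theorem LV_eq_lotkaVolterraLieDeriv (r s t : ℝ) (f : MvPolynomial (Fin 3) ℝ) :
    LV r s t f = lotkaVolterraLieDeriv !![0, r, s; -r, 0, t; -s, -t, 0] f := by
  simp [LV, lotkaVolterraLieDeriv, Fin.sum_univ_three]

theorem stmt12 (r s t : ℝ) (m : ℕ) (f : MvPolynomial (Fin 3) ℝ)
    (hf : f ≠ 0) (hhom : f.IsHomogeneous m) (α β γ : ℝ)
    (hD : LV r s t f = (C α * X 0 + C β * X 1 + C γ * X 2) * f) :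
    (α = 0 ∨ ∃ α1 α2 : ℕ, α = -(α1 * r) - α2 * s ∧ 1 ≤ α1 + α2 ∧ α1 + α2 ≤ m)
    ∧ (β = 0 ∨ ∃ β1 β2 : ℕ, β = β1 * r - β2 * t ∧ 1 ≤ β1 + β2 ∧ β1 + β2 ≤ m) := by
  have hLV : lotkaVolterraLieDeriv !![0, r, s; -r, 0, t; -s, -t, 0] f
      = (∑ j, C (![α, β, γ] j) * X j) * f := by
    rw [← LV_eq_lotkaVolterraLieDeriv, hD]
    simp [Fin.sum_univ_three]
  have hdeg (d : Fin 3 →₀ ℕ) (hd : d ∈ f.support) : d 0 + d 1 + d 2 = m := by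
    rw [hhom.degree_eq_sum_deg_support hd, ← Finsupp.degree_apply, Finsupp.degree_eq_sum,
      Fin.sum_univ_three]
  constructor
  · obtain ⟨d, hd, hα⟩ := exists_mem_support_cofactor_eq hf hLV 0
    replace hα : α = -(d 1 * r) - d 2 * s := by
      simpa [Fin.sum_univ_three, sub_eq_add_neg] using hα
    rcases Nat.eq_zero_or_pos (d 1 + d 2) with h0 | hpos
    · obtain ⟨h1, h2⟩ := Nat.add_eq_zero_iff.mp h0
      exact Or.inl (by simp [hα, h1, h2])
    · exact Or.inr ⟨d 1, d 2, hα, hpos, by have := hdeg d hd; omega⟩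
  · obtain ⟨d, hd, hβ⟩ := exists_mem_support_cofactor_eq hf hLV 1
    replace hβ : β = d 0 * r - d 2 * t := by
      simpa [Fin.sum_univ_three, sub_eq_add_neg] using hβ
    rcases Nat.eq_zero_or_pos (d 0 + d 2) with h0 | hpos
    · obtain ⟨h1, h2⟩ := Nat.add_eq_zero_iff.mp h0
      exact Or.inl (by simp [hβ, h1, h2])
    · exact Or.inr ⟨d 0, d 2, hβ, hpos, by have := hdeg d hd; omega⟩
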